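/- For every a ∈ ℝ with a ≠ 0 and every t > 0, ∫₀ᵗ (|a|·exp(−a²/(2νu))/√(2πνu³)) du = erfc(|a|/√(2νt)), where ν > 0 is a fixed constant. -/

import Mathlib

open Real

/-- The error function `erf x = (2/√π) ∫₀ˣ exp(−s²) ds`. -/
noncomputable def erf (x : ℝ) : ℝ := 2 / Real.sqrt π * ∫ s in (0:ℝ)..x, Real.exp (-s ^ 2)

/-- The complementary error function. -/
noncomputable def erfc (x : ℝ) : ℝ := 1 - erf x

/-!
Substituting `x = |a| / √(2νu)` turns the hitting density into `-erfc'(x) dx`: the function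
`u ↦ erfc (|a| / √(2νu))` is an antiderivative of the density on `(0, ∞)`, it tends to
`erfc ∞ = 1 - (2/√π)·(√π/2) = 0` as `u → 0⁺`, and the fundamental theorem of calculus gives the
claim. Integrability of the density comes for free, since it is a nonnegative derivative.
-/

open Filter MeasureTheory Set Topology

namespace intervalIntegral

theorem intervalIntegrable_deriv_of_nonneg_of_tendsto {f f' : ℝ → ℝ} {a b fa fb : ℝ}
    (hab : a < b) (hderiv : ∀ x ∈ Ioo a b, HasDerivAt f (f' x) x)
    (hpos : ∀ x ∈ Ioo a b, 0 ≤ f' x)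
    (ha : Tendsto f (𝓝[>] a) (𝓝 fa)) (hb : Tendsto f (𝓝[<] b) (𝓝 fb)) :
    IntervalIntegrable f' volume a b := by
  classical
  set F : ℝ → ℝ := Function.update (Function.update f a fa) b fb
  have hFderiv : ∀ x ∈ Ioo a b, HasDerivAt F (f' x) x := fun x hx =>
    (hderiv x hx).congr_of_eventuallyEq <| eventually_of_mem (Ioo_mem_nhds hx.1 hx.2)
      fun y hy => by simp only [F, Function.update_of_ne hy.2.ne, Function.update_of_ne hy.1.ne']
  have hFcont : ContinuousOn F (Icc a b) := by
    rw [continuousOn_update_iff, continuousOn_update_iff, Icc_sdiff_right, Ico_sdiff_left]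
    refine ⟨⟨fun z hz => (hderiv z hz).continuousAt.continuousWithinAt, fun _ =>
      ha.mono_left (nhdsWithin_mono _ Ioo_subset_Ioi_self)⟩, fun _ => ?_⟩
    refine (hb.congr' ?_).mono_left (nhdsWithin_mono _ Ico_subset_Iio_self)
    filter_upwards [Ioo_mem_nhdsLT hab] with z hz
    exact (Function.update_of_ne hz.1.ne' _ _).symm
  refine intervalIntegrable_deriv_of_nonneg (g := F) ?_ ?_ ?_ <;>
    simpa only [uIcc_of_le hab.le, min_eq_left hab.le, max_eq_right hab.le]

end intervalIntegral

theorem hasDerivAt_erf (x : ℝ) : HasDerivAt erf (2 / √π * exp (-x ^ 2)) x :=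
  ((by fun_prop : Continuous fun s : ℝ => exp (-s ^ 2)).integral_hasStrictDerivAt 0 x)
    |>.hasDerivAt.const_mul _

theorem hasDerivAt_erfc (x : ℝ) : HasDerivAt erfc (-(2 / √π * exp (-x ^ 2))) x :=
  (hasDerivAt_erf x).const_sub 1

theorem tendsto_erf_atTop : Tendsto erf atTop (𝓝 1) := by
  have hint : IntegrableOn (fun s : ℝ => exp (-s ^ 2)) (Ioi 0) := by
    simpa using (integrable_exp_neg_mul_sq one_pos).integrableOn
  have hgauss : 2 / √π * ∫ s in Ioi (0:ℝ), exp (-s ^ 2) = 1 := by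
    have : √π ≠ 0 := by positivity
    simpa [field, mul_comm] using integral_gaussian_Ioi 1
  exact hgauss ▸ (intervalIntegral_tendsto_integral_Ioi 0 hint tendsto_id).const_mul (2 / √π)

theorem tendsto_erfc_atTop : Tendsto erfc atTop (𝓝 0) :=
  sub_self (1 : ℝ) ▸ tendsto_erf_atTop.const_sub 1

theorem sqrt_two_mul_pi_mul_mul_pow_three (ν : ℝ) {u : ℝ} (hu : 0 ≤ u) :
    √(2 * π * ν * u ^ 3) = √π * √(2 * ν * u) * u := by
  rw [show 2 * π * ν * u ^ 3 = π * (2 * ν * u * u ^ 2) by ring, sqrt_mul pi_pos.le,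
    sqrt_mul' _ (sq_nonneg u), sqrt_sq hu]
  ring

theorem hasDerivAt_erfc_div_sqrt (c : ℝ) {ν u : ℝ} (hν : 0 < ν) (hu : 0 < u) :
    HasDerivAt (fun u => erfc (c / √(2 * ν * u)))
      (c * exp (-c ^ 2 / (2 * ν * u)) / √(2 * π * ν * u ^ 3)) u := by
  have hw : 0 < 2 * ν * u := by positivity
  have hsqrt : HasDerivAt (fun u => √(2 * ν * u)) (1 / (2 * √(2 * ν * u)) * (2 * ν)) u :=
    (hasDerivAt_sqrt hw.ne').comp u (by simpa using (hasDerivAt_id u).const_mul (2 * ν))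
  have hsqrt_pos : 0 < √(2 * ν * u) := sqrt_pos.mpr hw
  refine ((hasDerivAt_erfc _).comp u
    ((hasDerivAt_const u c).div hsqrt hsqrt_pos.ne')).congr_deriv ?_
  have hsq : (c / √(2 * ν * u)) ^ 2 = c ^ 2 / (2 * ν * u) := by
    rw [div_pow, sq_sqrt hw.le]
  simp only [Pi.div_apply, zero_mul, zero_sub]
  rw [hsq, sqrt_two_mul_pi_mul_mul_pow_three ν hu.le, sq_sqrt hw.le, neg_div]
  have : 0 < √π := sqrt_pos.mpr pi_pos
  field_simp

theorem tendsto_erfc_div_sqrt_nhdsGT_zero {c ν : ℝ} (hc : 0 < c) (hν : 0 < ν) :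
    Tendsto (fun u => erfc (c / √(2 * ν * u))) (𝓝[>] 0) (𝓝 0) := by
  have hsqrt : Tendsto (fun u => √(2 * ν * u)) (𝓝[>] 0) (𝓝[>] 0) := by
    refine tendsto_nhdsWithin_of_tendsto_nhds_of_eventually_within _ ?_ ?_
    · exact (by simpa using (by fun_prop : Continuous fun u => √(2 * ν * u)).tendsto 0 :
        Tendsto (fun u => √(2 * ν * u)) (𝓝 0) (𝓝 0)).mono_left nhdsWithin_le_nhds
    · filter_upwards [self_mem_nhdsWithin] with u (hu : 0 < u)
      exact sqrt_pos.mpr (by positivity)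
  simp only [div_eq_mul_inv]
  exact tendsto_erfc_atTop.comp ((tendsto_inv_nhdsGT_zero.comp hsqrt).const_mul_atTop hc)

/-- The integral of the density of the first hitting time of level `a` by a Brownian motion
with variance parameter `ν` equals `erfc (|a|/√(2νt))`. -/
theorem integral_hitting_density_eq_erfc (ν a t : ℝ) (hν : 0 < ν) (ha : a ≠ 0) (ht : 0 < t) :
    ∫ u in (0:ℝ)..t, |a| * Real.exp (-(a ^ 2) / (2 * ν * u)) / Real.sqrt (2 * π * ν * u ^ 3) =
      erfc (|a| / Real.sqrt (2 * ν * t)) := by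
  have hderiv : ∀ u, 0 < u → HasDerivAt (fun u => erfc (|a| / √(2 * ν * u)))
      (|a| * exp (-(a ^ 2) / (2 * ν * u)) / √(2 * π * ν * u ^ 3)) u := fun u hu => by
    simpa only [sq_abs] using hasDerivAt_erfc_div_sqrt |a| hν hu
  have hderiv₀ : ∀ u ∈ Ioo 0 t, HasDerivAt _ _ u := fun u hu => hderiv u hu.1
  have hlim₀ := tendsto_erfc_div_sqrt_nhdsGT_zero (abs_pos.mpr ha) hν
  have hlim_t := (hderiv t ht).continuousAt.tendsto.mono_left (nhdsWithin_le_nhds (s := Iio t))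
  have hint := intervalIntegral.intervalIntegrable_deriv_of_nonneg_of_tendsto ht hderiv₀
    (fun u _ => by positivity) hlim₀ hlim_t
  rw [intervalIntegral.integral_eq_sub_of_hasDerivAt_of_tendsto ht hderiv₀ hint hlim₀ hlim_t,
    sub_zero]
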